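/- arXiv:math/9902146 — 6 statements merged into one kernel-verified Lean document; each statement's English description precedes it below -/
import Mathlib

section
/- Every even, symmetric, q_N-invariant element K of q_N ⊗ q_N is a scalar multiple of E^{⊗2}, where E = Σ_{i=1}^{N} (E_{ii} + E_{-i,-i}). Here symmetric means K_{12} = K_{21} under the super flip, and invariant means [X⊗1 + 1⊗X, K] = 0 for all X ∈ q_N. -/
open Matrix

/-- Index set `±1,…,±N`: `Sum.inl` are the positive indices, `Sum.inr` the negative ones. -/
abbrev Idx (N : ℕ) := Fin N ⊕ Fin N

/-- The parity `ī` of an index: `0` for positive, `1` for negative indices. -/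
def bar {N : ℕ} : Idx N → ℕ := Sum.elim (fun _ => 0) (fun _ => 1)

/-- The map `i ↦ -i`. -/
def negI {N : ℕ} : Idx N → Idx N := Sum.elim Sum.inr Sum.inl

/-- Multiplication in the super tensor square, on coefficient matrices:
`Z p q` is the coefficient of `E_{p.1 q.1} ⊗ E_{p.2 q.2}`. -/
noncomputable def superMul2 {N : ℕ} (Z W : Matrix (Idx N × Idx N) (Idx N × Idx N) ℂ) :
    Matrix (Idx N × Idx N) (Idx N × Idx N) ℂ :=
  Matrix.of fun p q => ∑ k : Idx N, ∑ l : Idx N,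
    (-1 : ℂ) ^ ((bar k + bar q.1) * (bar p.2 + bar l)) * Z p (k, l) * W (k, l) q

/-- The odd part of an element of the super tensor square. -/
noncomputable def oddPart2 {N : ℕ} (Z : Matrix (Idx N × Idx N) (Idx N × Idx N) ℂ) :
    Matrix (Idx N × Idx N) (Idx N × Idx N) ℂ :=
  Matrix.of fun p q =>
    if (bar p.1 + bar p.2 + bar q.1 + bar q.2) % 2 = 1 then Z p q else 0

/-- The supercommutator in the super tensor square. -/
noncomputable def sbr2 {N : ℕ} (Z W : Matrix (Idx N × Idx N) (Idx N × Idx N) ℂ) :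
    Matrix (Idx N × Idx N) (Idx N × Idx N) ℂ :=
  superMul2 Z W - superMul2 W Z + (2 : ℂ) • superMul2 (oddPart2 W) (oddPart2 Z)

/-- The coefficient matrix of `X ⊗ 1 + 1 ⊗ X`. -/
noncomputable def embL {N : ℕ} (X : Matrix (Idx N) (Idx N) ℂ) :
    Matrix (Idx N × Idx N) (Idx N × Idx N) ℂ :=
  Matrix.of fun p q =>
    X p.1 q.1 * (if p.2 = q.2 then 1 else 0) + (if p.1 = q.1 then 1 else 0) * X p.2 q.2


lemma negI_inl {N : ℕ} (x : Fin N) : negI (Sum.inl x) = Sum.inr x := rfl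
lemma negI_inr {N : ℕ} (x : Fin N) : negI (Sum.inr x) = Sum.inl x := rfl

lemma negI_negI {N : ℕ} (i : Idx N) : negI (negI i) = i := by cases i <;> rfl
lemma negI_eq_iff {N : ℕ} (i j : Idx N) : negI i = j ↔ i = negI j := by
  constructor <;> rintro rfl <;> simp [negI_negI]

lemma sum_ite_const {N : ℕ} {P : Prop} [Decidable P] (f g : Idx N → ℂ) :
    ∑ k : Idx N, (if P then f k else g k) = if P then ∑ k : Idx N, f k else ∑ k : Idx N, g k := by
  split <;> rfl

section
variable {N : ℕ} (Z : Matrix (Idx N × Idx N) (Idx N × Idx N) ℂ)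

lemma oddPart2_zero
    (heven : ∀ p q : Idx N × Idx N,
      (bar p.1 + bar p.2 + bar q.1 + bar q.2) % 2 = 1 → Z p q = 0) :
    oddPart2 Z = 0 := by
  ext p q
  simp only [oddPart2, Matrix.of_apply, Matrix.zero_apply]
  split
  · exact heven p q (by assumption)
  · rfl

lemma superMul2_zero_left (W : Matrix (Idx N × Idx N) (Idx N × Idx N) ℂ) :
    superMul2 (0 : Matrix (Idx N × Idx N) (Idx N × Idx N) ℂ) W = 0 := by
  ext p q
  simp [superMul2]

lemma keyRel
    (heven : ∀ p q : Idx N × Idx N,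
      (bar p.1 + bar p.2 + bar q.1 + bar q.2) % 2 = 1 → Z p q = 0)
    (hinv : ∀ X : Matrix (Idx N) (Idx N) ℂ,
      (∀ i k : Idx N, X (negI i) (negI k) = X i k) → sbr2 (embL X) Z = 0)
    (a b : Idx N) (p q : Idx N × Idx N) :
    (if p.1 = a then 1 else 0) * (-1:ℂ)^((bar b + bar q.1)*(bar p.2 + bar p.2)) * Z (b, p.2) q
    + (if p.1 = negI a then 1 else 0) * (-1)^((bar (negI b) + bar q.1)*(bar p.2 + bar p.2)) * Z (negI b, p.2) q
    + (if p.2 = a then 1 else 0) * (-1)^((bar p.1 + bar q.1)*(bar p.2 + bar b)) * Z (p.1, b) q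
    + (if p.2 = negI a then 1 else 0) * (-1)^((bar p.1 + bar q.1)*(bar p.2 + bar (negI b))) * Z (p.1, negI b) q
    =
    (if q.1 = b then 1 else 0) * (-1)^((bar a + bar q.1)*(bar p.2 + bar q.2)) * Z p (a, q.2)
    + (if q.1 = negI b then 1 else 0) * (-1)^((bar (negI a) + bar q.1)*(bar p.2 + bar q.2)) * Z p (negI a, q.2)
    + (if q.2 = b then 1 else 0) * (-1)^((bar q.1 + bar q.1)*(bar p.2 + bar a)) * Z p (q.1, a)
    + (if q.2 = negI b then 1 else 0) * (-1)^((bar q.1 + bar q.1)*(bar p.2 + bar (negI a))) * Z p (q.1, negI a) := by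
  set X : Matrix (Idx N) (Idx N) ℂ := Matrix.of fun i k =>
    (if i = a then if k = b then 1 else 0 else 0)
    + (if i = negI a then if k = negI b then 1 else 0 else 0) with hXdef
  have hX : ∀ i k : Idx N, X (negI i) (negI k) = X i k := by
    intro i k
    simp only [hXdef, Matrix.of_apply, negI_eq_iff, negI_negI]
    rw [add_comm]
  have h := hinv X hX
  have h0 : oddPart2 Z = 0 := oddPart2_zero Z heven
  have h1 : superMul2 (embL X) Z p q = superMul2 Z (embL X) p q := by
    have := congrFun (congrFun h p) q
    simp only [sbr2, h0, superMul2_zero_left, Matrix.sub_apply, Matrix.add_apply,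
      Matrix.smul_apply, Matrix.zero_apply, smul_zero, add_zero, sub_eq_zero] at this
    exact this
  have hL : superMul2 (embL X) Z p q =
      (if p.1 = a then 1 else 0) * (-1:ℂ)^((bar b + bar q.1)*(bar p.2 + bar p.2)) * Z (b, p.2) q
      + (if p.1 = negI a then 1 else 0) * (-1)^((bar (negI b) + bar q.1)*(bar p.2 + bar p.2)) * Z (negI b, p.2) q
      + (if p.2 = a then 1 else 0) * (-1)^((bar p.1 + bar q.1)*(bar p.2 + bar b)) * Z (p.1, b) q
      + (if p.2 = negI a then 1 else 0) * (-1)^((bar p.1 + bar q.1)*(bar p.2 + bar (negI b))) * Z (p.1, negI b) q := by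
    simp only [superMul2, embL, Matrix.of_apply, hXdef]
    simp only [mul_add, add_mul, mul_ite, ite_mul, mul_one, mul_zero, one_mul, zero_mul,
      Finset.sum_add_distrib, sum_ite_const, Finset.sum_ite_eq, Finset.sum_ite_eq',
      Finset.mem_univ, if_true, Finset.sum_const_zero, add_zero, zero_add]
    ring_nf
  have hR : superMul2 Z (embL X) p q =
      (if q.1 = b then 1 else 0) * (-1:ℂ)^((bar a + bar q.1)*(bar p.2 + bar q.2)) * Z p (a, q.2)
      + (if q.1 = negI b then 1 else 0) * (-1)^((bar (negI a) + bar q.1)*(bar p.2 + bar q.2)) * Z p (negI a, q.2)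
      + (if q.2 = b then 1 else 0) * (-1)^((bar q.1 + bar q.1)*(bar p.2 + bar a)) * Z p (q.1, a)
      + (if q.2 = negI b then 1 else 0) * (-1)^((bar q.1 + bar q.1)*(bar p.2 + bar (negI a))) * Z p (q.1, negI a) := by
    simp only [superMul2, embL, Matrix.of_apply, hXdef]
    simp only [mul_add, add_mul, mul_ite, ite_mul, mul_one, mul_zero, one_mul, zero_mul,
      Finset.sum_add_distrib, sum_ite_const, Finset.sum_ite_eq, Finset.sum_ite_eq',
      Finset.mem_univ, if_true, Finset.sum_const_zero, add_zero, zero_add]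
    ring_nf
  rw [← hL, ← hR, h1]

variable
    (heven : ∀ p q : Idx N × Idx N,
      (bar p.1 + bar p.2 + bar q.1 + bar q.2) % 2 = 1 → Z p q = 0)
    (hinv : ∀ X : Matrix (Idx N) (Idx N) ℂ,
      (∀ i k : Idx N, X (negI i) (negI k) = X i k) → sbr2 (embL X) Z = 0)
    (hq1 : ∀ p q : Idx N × Idx N, Z (negI p.1, p.2) (negI q.1, q.2) = Z p q)
    (hq2 : ∀ p q : Idx N × Idx N, Z (p.1, negI p.2) (q.1, negI q.2) = Z p q)

include heven hinv

lemma Zmis1 (i j x : Fin N) (l : Idx N) (hxi : x ≠ i) (hxj : x ≠ j) :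
    Z (Sum.inl i, Sum.inl j) (Sum.inl x, l) = 0 := by
  have K := keyRel Z heven hinv (Sum.inl x) (Sum.inl x) (Sum.inl i, Sum.inl j) (Sum.inl x, l)
  rcases l with y | y <;> by_cases hyx : y = x <;> (try subst hyx) <;>
    (first
      | simp [bar, negI, Ne.symm hxi, Ne.symm hxj, hyx] at K
      | simp [bar, negI, Ne.symm hxi, Ne.symm hxj] at K) <;>
    first
      | linear_combination K
      | linear_combination K / 2
      | linear_combination -K
      | linear_combination -K / 2
      | exact K
      | exact K.symm

lemma Zmis1' (i j x : Fin N) (l : Idx N) (hxi : x ≠ i) (hxj : x ≠ j) :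
    Z (Sum.inl i, Sum.inl j) (Sum.inr x, l) = 0 := by
  have K := keyRel Z heven hinv (Sum.inl x) (Sum.inl x) (Sum.inl i, Sum.inl j) (Sum.inr x, l)
  rcases l with y | y <;> by_cases hyx : y = x <;> (try subst hyx) <;>
    (first
      | simp [bar, negI, Ne.symm hxi, Ne.symm hxj, hyx] at K
      | simp [bar, negI, Ne.symm hxi, Ne.symm hxj] at K) <;>
    first
      | linear_combination K
      | linear_combination K / 2
      | linear_combination -K
      | linear_combination -K / 2
      | exact K
      | exact K.symm

lemma Zmis2 (i j y : Fin N) (k : Idx N) (hyi : y ≠ i) (hyj : y ≠ j) :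
    Z (Sum.inl i, Sum.inl j) (k, Sum.inl y) = 0 := by
  have K := keyRel Z heven hinv (Sum.inl y) (Sum.inl y) (Sum.inl i, Sum.inl j) (k, Sum.inl y)
  rcases k with x | x <;> by_cases hxy : x = y <;> (try subst hxy) <;>
    (first
      | simp [bar, negI, Ne.symm hyi, Ne.symm hyj, hxy] at K
      | simp [bar, negI, Ne.symm hyi, Ne.symm hyj] at K) <;>
    first
      | linear_combination K
      | linear_combination K / 2
      | linear_combination -K
      | linear_combination -K / 2
      | exact K
      | exact K.symm

lemma Zmis2' (i j y : Fin N) (k : Idx N) (hyi : y ≠ i) (hyj : y ≠ j) :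
    Z (Sum.inl i, Sum.inl j) (k, Sum.inr y) = 0 := by
  have K := keyRel Z heven hinv (Sum.inl y) (Sum.inl y) (Sum.inl i, Sum.inl j) (k, Sum.inr y)
  rcases k with x | x <;> by_cases hxy : x = y <;> (try subst hxy) <;>
    (first
      | simp [bar, negI, Ne.symm hyi, Ne.symm hyj, hxy] at K
      | simp [bar, negI, Ne.symm hyi, Ne.symm hyj] at K) <;>
    first
      | linear_combination K
      | linear_combination K / 2
      | linear_combination -K
      | linear_combination -K / 2
      | exact K
      | exact K.symm

lemma ZmisP1 (i j : Fin N) (q : Idx N × Idx N) (h1 : q.1 ≠ Sum.inl i) (h2 : q.1 ≠ Sum.inr i)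
    (h3 : q.2 ≠ Sum.inl i) (h4 : q.2 ≠ Sum.inr i) :
    Z (Sum.inl i, Sum.inl j) q = 0 := by
  have K := keyRel Z heven hinv (Sum.inl i) (Sum.inl i) (Sum.inl i, Sum.inl j) q
  obtain ⟨q1, q2⟩ := q
  simp only at h1 h2 h3 h4
  by_cases hij : j = i <;> (try subst hij) <;>
    rcases q1 with u | u <;> rcases q2 with v | v <;>
    (first
      | simp [bar, negI, h1, h2, h3, h4, hij] at K
      | simp [bar, negI, h1, h2, h3, h4] at K) <;>
    first
      | linear_combination K
      | linear_combination K / 2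
      | linear_combination -K
      | linear_combination -K / 2
      | exact K
      | exact K.symm

lemma ZmisP2 (i j : Fin N) (q : Idx N × Idx N) (h1 : q.1 ≠ Sum.inl j) (h2 : q.1 ≠ Sum.inr j)
    (h3 : q.2 ≠ Sum.inl j) (h4 : q.2 ≠ Sum.inr j) :
    Z (Sum.inl i, Sum.inl j) q = 0 := by
  have K := keyRel Z heven hinv (Sum.inl j) (Sum.inl j) (Sum.inl i, Sum.inl j) q
  obtain ⟨q1, q2⟩ := q
  simp only at h1 h2 h3 h4
  by_cases hij : i = j <;> (try subst hij) <;>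
    rcases q1 with u | u <;> rcases q2 with v | v <;>
    (first
      | simp [bar, negI, h1, h2, h3, h4, hij] at K
      | simp [bar, negI, h1, h2, h3, h4] at K) <;>
    first
      | linear_combination K
      | linear_combination K / 2
      | linear_combination -K
      | linear_combination -K / 2
      | exact K
      | exact K.symm

include hq1 hq2 in
lemma Zu3 (i j : Fin N) (hij : i ≠ j) :
    Z (Sum.inl i, Sum.inl j) (Sum.inl j, Sum.inl i) = 0 := by
  have K1 := keyRel Z heven hinv (Sum.inl j) (Sum.inr j) (Sum.inl i, Sum.inl j) (Sum.inr j, Sum.inl i)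
  have K2 := keyRel Z heven hinv (Sum.inl i) (Sum.inr i) (Sum.inl i, Sum.inl j) (Sum.inl j, Sum.inr i)
  have e1 := hq2 (Sum.inl i, Sum.inl j) (Sum.inr j, Sum.inr i)
  have e2 := hq1 (Sum.inl i, Sum.inl j) (Sum.inr j, Sum.inr i)
  simp only [negI, Sum.elim_inl, Sum.elim_inr] at e1 e2
  simp [bar, negI, hij, Ne.symm hij] at K1 K2
  linear_combination (-K1 - e1 - K2 + e2) / 2

include hq1 hq2 in
lemma Zu4 (i j : Fin N) (hij : i ≠ j) :
    Z (Sum.inl i, Sum.inl j) (Sum.inr j, Sum.inr i) = 0 := by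
  have K2 := keyRel Z heven hinv (Sum.inl i) (Sum.inr i) (Sum.inl i, Sum.inl j) (Sum.inl j, Sum.inr i)
  have e2 := hq1 (Sum.inl i, Sum.inl j) (Sum.inr j, Sum.inr i)
  simp only [negI, Sum.elim_inl, Sum.elim_inr] at e2
  simp [bar, negI, hij, Ne.symm hij] at K2
  have h3 := Zu3 Z heven hinv hq1 hq2 i j hij
  linear_combination K2 - e2 + h3

include hq1 hq2 in
lemma Zu2 (i j : Fin N) :
    Z (Sum.inl i, Sum.inl j) (Sum.inr i, Sum.inr j) = 0 := by
  have K := keyRel Z heven hinv (Sum.inl i) (Sum.inr i) (Sum.inl i, Sum.inl j) (Sum.inl i, Sum.inr j)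
  have e3 := hq1 (Sum.inl i, Sum.inl j) (Sum.inr i, Sum.inr j)
  simp only [negI, Sum.elim_inl, Sum.elim_inr] at e3
  by_cases hji : j = i
  · subst hji
    have e4 := hq2 (Sum.inl j, Sum.inl j) (Sum.inl j, Sum.inl j)
    simp only [negI, Sum.elim_inl, Sum.elim_inr] at e4
    simp [bar, negI] at K
    linear_combination (K - e3 - e4) / 2
  · simp [bar, negI, hji, Ne.symm hji] at K
    linear_combination (K - e3) / 2

include hq1 hq2 in
lemma Zlink (u v : Fin N) (huv : u ≠ v) :
    Z (Sum.inl u, Sum.inl u) (Sum.inl u, Sum.inl u) = Z (Sum.inl v, Sum.inl u) (Sum.inl v, Sum.inl u) := by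
  have K := keyRel Z heven hinv (Sum.inl u) (Sum.inl v) (Sum.inl u, Sum.inl u) (Sum.inl v, Sum.inl u)
  have h3 := Zu3 Z heven hinv hq1 hq2 u v huv
  simp [bar, negI, huv, Ne.symm huv] at K
  linear_combination h3 - K

include hq1 hq2 in
lemma mainPos (i j : Fin N) (q : Idx N × Idx N) :
    Z (Sum.inl i, Sum.inl j) q =
      if ((Sum.inl i : Idx N), (Sum.inl j : Idx N)) = q then
        Z (Sum.inl i, Sum.inl j) (Sum.inl i, Sum.inl j) else 0 := by
  obtain ⟨q1, q2⟩ := q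
  rcases q1 with x | x <;> rcases q2 with y | y
  · -- (inl x, inl y)
    by_cases hxi : i = x
    · subst hxi
      by_cases hyj : j = y
      · subst hyj; simp
      · rw [if_neg (by simp [hyj])]
        by_cases hyi : i = y
        · subst hyi
          exact ZmisP2 Z heven hinv i j _ (by simp [Ne.symm hyj]) (by simp)
            (by simp [Ne.symm hyj]) (by simp)
        · exact Zmis2 Z heven hinv i j y _ (fun h => hyi h.symm) (fun h => hyj h.symm)
    · by_cases hxj : j = x
      · subst hxj
        by_cases hyi : i = y
        · subst hyi
          rw [if_neg (by simp [hxi])]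
          exact Zu3 Z heven hinv hq1 hq2 i j hxi
        · by_cases hyj : j = y
          · subst hyj
            rw [if_neg (by simp [hxi])]
            exact ZmisP1 Z heven hinv i j _ (by simp [Ne.symm hxi]) (by simp)
              (by simp [Ne.symm hxi]) (by simp)
          · rw [if_neg (by simp [hyj])]
            exact Zmis2 Z heven hinv i j y _ (fun h => hyi h.symm) (fun h => hyj h.symm)
      · rw [if_neg (by simp [hxi])]
        exact Zmis1 Z heven hinv i j x _ (fun h => hxi h.symm) (fun h => hxj h.symm)
  · rw [if_neg (by simp)]
    exact heven _ _ (by simp [bar])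
  · rw [if_neg (by simp)]
    exact heven _ _ (by simp [bar])
  · rw [if_neg (by simp)]
    by_cases hxi : i = x
    · subst hxi
      by_cases hyj : j = y
      · subst hyj
        exact Zu2 Z heven hinv hq1 hq2 i j
      · by_cases hyi : i = y
        · subst hyi
          exact ZmisP2 Z heven hinv i j _ (by simp) (by simp [Ne.symm hyj]) (by simp)
            (by simp [Ne.symm hyj])
        · exact Zmis2' Z heven hinv i j y _ (fun h => hyi h.symm) (fun h => hyj h.symm)
    · by_cases hxj : j = x
      · subst hxj
        by_cases hyi : i = y
        · subst hyi
          exact Zu4 Z heven hinv hq1 hq2 i j hxi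
        · by_cases hyj : j = y
          · subst hyj
            exact ZmisP1 Z heven hinv i j _ (by simp) (by simp [Ne.symm hxi]) (by simp)
              (by simp [Ne.symm hxi])
          · exact Zmis2' Z heven hinv i j y _ (fun h => hyi h.symm) (fun h => hyj h.symm)
      · exact Zmis1' Z heven hinv i j x _ (fun h => hxi h.symm) (fun h => hxj h.symm)

end

/-- Every even, symmetric, q_N-invariant element `K` of `q_N ⊗ q_N` is a scalar multiple of
`E^{⊗2}`, where `E = Σ_i (E_{ii} + E_{-i,-i})` is the identity matrix, whose coefficient
matrix in the super tensor square is the identity.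
`K` is recorded by its coefficient matrix `Z`:
* `hq1`, `hq2` say that `K` is fixed by `η⊗id` and `id⊗η`, i.e. `K ∈ q_N ⊗ q_N`;
* `heven` says `K` has ℤ₂-degree zero;
* `hsym` says `K` is fixed by the super flip `X⊗Y ↦ Y⊗X·(-1)^{deg X deg Y}`;
* `hinv` says `[X⊗1 + 1⊗X, K] = 0` for every `X ∈ q_N` (i.e. every `η`-fixed `X`). -/
theorem even_symmetric_invariant_eq_smul_E_tensor_E
    (N : ℕ) (Z : Matrix (Idx N × Idx N) (Idx N × Idx N) ℂ)
    (hq1 : ∀ p q : Idx N × Idx N, Z (negI p.1, p.2) (negI q.1, q.2) = Z p q)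
    (hq2 : ∀ p q : Idx N × Idx N, Z (p.1, negI p.2) (q.1, negI q.2) = Z p q)
    (heven : ∀ p q : Idx N × Idx N,
      (bar p.1 + bar p.2 + bar q.1 + bar q.2) % 2 = 1 → Z p q = 0)
    (hsym : ∀ p q : Idx N × Idx N,
      Z p q = (-1 : ℂ) ^ ((bar p.1 + bar q.1) * (bar p.2 + bar q.2)) * Z (p.2, p.1) (q.2, q.1))
    (hinv : ∀ X : Matrix (Idx N) (Idx N) ℂ,
      (∀ i k : Idx N, X (negI i) (negI k) = X i k) → sbr2 (embL X) Z = 0) :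
    ∃ c : ℂ, Z = c • (1 : Matrix (Idx N × Idx N) (Idx N × Idx N) ℂ) := by
  by_cases hN : N = 0
  · subst hN
    refine ⟨0, ?_⟩
    ext p q
    rcases p with ⟨p1, p2⟩
    rcases p1 with x | x <;> exact x.elim0
  · set P : Fin N → Idx N := Sum.inl with hP
    obtain e0 : Fin N := ⟨0, Nat.pos_of_ne_zero hN⟩
    have v1eq : ∀ u v : Fin N,
        Z (Sum.inl u, Sum.inl u) (Sum.inl u, Sum.inl u)
          = Z (Sum.inl v, Sum.inl v) (Sum.inl v, Sum.inl v) := by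
      intro u v
      by_cases huv : u = v
      · rw [huv]
      · have l1 := Zlink Z heven hinv hq1 hq2 u v huv
        have l2 := Zlink Z heven hinv hq1 hq2 v u (Ne.symm huv)
        have s := hsym (Sum.inl v, Sum.inl u) (Sum.inl v, Sum.inl u)
        simp [bar] at s
        linear_combination l1 + s - l2
    set c : ℂ := Z (Sum.inl e0, Sum.inl e0) (Sum.inl e0, Sum.inl e0) with hc
    have hdiag : ∀ u v : Fin N, Z (Sum.inl u, Sum.inl v) (Sum.inl u, Sum.inl v) = c := by
      intro u v
      by_cases huv : u = v
      · rw [huv]; exact v1eq v e0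
      · have l := Zlink Z heven hinv hq1 hq2 v u (Ne.symm huv)
        rw [← l]; exact v1eq v e0
    refine ⟨c, ?_⟩
    ext p q
    obtain ⟨p1, p2⟩ := p
    obtain ⟨q1, q2⟩ := q
    simp only [Matrix.smul_apply, Matrix.one_apply, smul_eq_mul, mul_ite, mul_one, mul_zero]
    rcases p1 with i | i <;> rcases p2 with j | j
    · rw [mainPos Z heven hinv hq1 hq2 i j (q1, q2), hdiag i j]
    · have e := hq2 (Sum.inl i, Sum.inl j) (q1, negI q2)
      simp only [negI_negI, negI_inl, negI_inr] at e
      rw [e, mainPos Z heven hinv hq1 hq2 i j (q1, negI q2), hdiag i j]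
      have hiff : (((Sum.inl i : Idx N), (Sum.inl j : Idx N)) = (q1, negI q2))
          ↔ (((Sum.inl i : Idx N), (Sum.inr j : Idx N)) = (q1, q2)) := by
        rcases q2 with a | a <;> simp [negI_inl, negI_inr, Prod.ext_iff]
      rw [if_congr hiff rfl rfl]
    · have e := hq1 (Sum.inl i, Sum.inl j) (negI q1, q2)
      simp only [negI_negI, negI_inl, negI_inr] at e
      rw [e, mainPos Z heven hinv hq1 hq2 i j (negI q1, q2), hdiag i j]
      have hiff : (((Sum.inl i : Idx N), (Sum.inl j : Idx N)) = (negI q1, q2))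
          ↔ (((Sum.inr i : Idx N), (Sum.inl j : Idx N)) = (q1, q2)) := by
        rcases q1 with a | a <;> simp [negI_inl, negI_inr, Prod.ext_iff]
      rw [if_congr hiff rfl rfl]
    · have e1 := hq1 (Sum.inl i, Sum.inr j) (negI q1, q2)
      simp only [negI_negI, negI_inl, negI_inr] at e1
      have e2 := hq2 (Sum.inl i, Sum.inl j) (negI q1, negI q2)
      simp only [negI_negI, negI_inl, negI_inr] at e2
      rw [e1, e2, mainPos Z heven hinv hq1 hq2 i j (negI q1, negI q2), hdiag i j]
      have hiff : (((Sum.inl i : Idx N), (Sum.inl j : Idx N)) = (negI q1, negI q2))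
          ↔ (((Sum.inr i : Idx N), (Sum.inr j : Idx N)) = (q1, q2)) := by
        rcases q1 with a | a <;> rcases q2 with b | b <;> simp [negI_inl, negI_inr, Prod.ext_iff]
      rw [if_congr hiff rfl rfl]
end

section
/- In the crossed product H_n of the symmetric group S_n with the Clifford algebra on generators c₁,…,c_n (with c_p² = −1, c_p c_q = −c_q c_p for p ≠ q, and w c_p w^{-1} = c_{w(p)} for w ∈ S_n), the Jucys–Murphy-type elements m_p = Σ_{1 ≤ r < p} (1 + c_p c_r) w_{pr}, p = 1,…,n, pairwise commute: m_p m_q = m_q m_p for all p, q. -/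
open Equiv

/- We work with the Sergeev algebra `H_n`, the crossed product of the symmetric group
`S_n` with the Clifford algebra on `n` anticommuting generators `c₁,…,c_n` with
`c_p² = -1`, on which `S_n` acts by permuting the generators.  We phrase statements
universally: in any ring `A` equipped with a multiplicative action `π` of `S_n` and
elements `c p` satisfying the defining relations of `H_n`. -/

variable {A : Type*} [Ring A] {n : ℕ}

/-- The Jucys–Murphy-type element `m_p = Σ_{1 ≤ r < p} (1 + c_p c_r) w_{pr}`. -/
noncomputable def mElt (π : Equiv.Perm (Fin n) →* A) (c : Fin n → A) (p : Fin n) : A :=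
  ∑ r ∈ Finset.univ.filter (· < p), (1 + c p * c r) * π (Equiv.swap p r)

/-- The generator `c s` commutes with `m_q` whenever `s ≠ q`. -/
lemma c_mul_mElt (π : Equiv.Perm (Fin n) →* A) (c : Fin n → A)
    (hc2 : ∀ p, c p * c p = -1)
    (hcc : ∀ p q, p ≠ q → c p * c q = -(c q * c p))
    (hwc : ∀ (w : Equiv.Perm (Fin n)) (p : Fin n), π w * c p = c (w p) * π w)
    (q s : Fin n) (hs : s ≠ q) :
    c s * mElt π c q = mElt π c q * c s := by
  unfold mElt
  rw [Finset.mul_sum, Finset.sum_mul]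
  refine Finset.sum_congr rfl fun r hr => ?_
  have hrq : r ≠ q := by
    simp only [Finset.mem_filter] at hr
    exact ne_of_lt hr.2
  have key : c s * (1 + c q * c r) = (1 + c q * c r) * c (Equiv.swap q r s) := by
    by_cases hsr : s = r
    · subst hsr
      rw [Equiv.swap_apply_right]
      have h1 : c s * (c q * c s) = c q := by
        rw [← mul_assoc, hcc s q hs, neg_mul, mul_assoc, hc2, mul_neg, neg_neg, mul_one]
      have h2 : c q * c s * c q = c s := by
        rw [mul_assoc, hcc s q hs, mul_neg, ← mul_assoc, hc2, neg_mul, neg_neg, one_mul]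
      rw [mul_one_add, one_add_mul, h1, h2, add_comm]
    · rw [Equiv.swap_apply_of_ne_of_ne hs hsr]
      have h3 : c s * (c q * c r) = c q * c r * c s := by
        rw [← mul_assoc, hcc s q hs, neg_mul, mul_assoc, hcc s r hsr, mul_neg, neg_neg,
          ← mul_assoc]
      rw [mul_one_add, one_add_mul, h3]
  calc c s * ((1 + c q * c r) * π (Equiv.swap q r))
      = (c s * (1 + c q * c r)) * π (Equiv.swap q r) := by rw [mul_assoc]
    _ = (1 + c q * c r) * (c (Equiv.swap q r s) * π (Equiv.swap q r)) := by
        rw [key, mul_assoc]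
    _ = (1 + c q * c r) * (π (Equiv.swap q r) * c s) := by rw [hwc]
    _ = (1 + c q * c r) * π (Equiv.swap q r) * c s := by rw [mul_assoc]

/-- `π w` commutes with `m_q` whenever `w` fixes `q` and preserves `{r : r < q}`. -/
lemma pi_mul_mElt (π : Equiv.Perm (Fin n) →* A) (c : Fin n → A)
    (hwc : ∀ (w : Equiv.Perm (Fin n)) (p : Fin n), π w * c p = c (w p) * π w)
    (q : Fin n) (w : Equiv.Perm (Fin n)) (hq : w q = q)
    (hlt : ∀ r, r < q ↔ w r < q) :
    π w * mElt π c q = mElt π c q * π w := by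
  unfold mElt
  rw [Finset.mul_sum, Finset.sum_mul]
  refine Finset.sum_equiv w (fun r => by simp [← hlt r]) (fun r hr => ?_)
  have : π w * ((1 + c q * c r) * π (Equiv.swap q r))
      = (1 + c q * c (w r)) * (π w * π (Equiv.swap q r)) := by
    rw [← mul_assoc, mul_one_add, one_add_mul, ← mul_assoc, hwc, hq, mul_assoc (c q), hwc,
      ← mul_assoc, ← mul_assoc, add_mul]
  rw [this, ← map_mul, Equiv.mul_swap_eq_swap_mul, hq, map_mul, ← mul_assoc]

/-- The key case `p < q`. -/
lemma mElt_comm_of_lt (π : Equiv.Perm (Fin n) →* A) (c : Fin n → A)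
    (hc2 : ∀ p, c p * c p = -1)
    (hcc : ∀ p q, p ≠ q → c p * c q = -(c q * c p))
    (hwc : ∀ (w : Equiv.Perm (Fin n)) (p : Fin n), π w * c p = c (w p) * π w)
    {p q : Fin n} (hpq : p < q) :
    mElt π c p * mElt π c q = mElt π c q * mElt π c p := by
  rw [mElt, Finset.sum_mul, Finset.mul_sum]
  refine Finset.sum_congr rfl fun r hr => ?_
  have hrp : r < p := by simpa using hr
  have hrq : r < q := hrp.trans hpq
  have hswap : π (Equiv.swap p r) * mElt π c q = mElt π c q * π (Equiv.swap p r) := by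
    refine pi_mul_mElt π c hwc q _ (Equiv.swap_apply_of_ne_of_ne (ne_of_lt hpq).symm
      (ne_of_lt hrq).symm) fun x => ?_
    constructor
    · intro hx
      by_cases h1 : x = p
      · simpa [h1] using hrq
      by_cases h2 : x = r
      · simpa [h2] using hpq
      · rwa [Equiv.swap_apply_of_ne_of_ne h1 h2]
    · intro hx
      by_cases h1 : x = p
      · exact h1 ▸ hpq
      by_cases h2 : x = r
      · exact h2 ▸ hrq
      · rwa [Equiv.swap_apply_of_ne_of_ne h1 h2] at hx
  have hcp := c_mul_mElt π c hc2 hcc hwc q p (ne_of_lt hpq)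
  have hcr := c_mul_mElt π c hc2 hcc hwc q r (ne_of_lt hrq)
  have hcliff : (1 + c p * c r) * mElt π c q = mElt π c q * (1 + c p * c r) := by
    rw [one_add_mul, mul_one_add, mul_assoc, hcr, ← mul_assoc, hcp, mul_assoc]
  calc (1 + c p * c r) * π (Equiv.swap p r) * mElt π c q
      = (1 + c p * c r) * (mElt π c q * π (Equiv.swap p r)) := by
        rw [mul_assoc, hswap]
    _ = mElt π c q * ((1 + c p * c r) * π (Equiv.swap p r)) := by
        rw [← mul_assoc, hcliff, mul_assoc]

/-- In the crossed product `H_n` of `S_n` with the Clifford algebra, the elements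
`m_p = Σ_{1 ≤ r < p} (1 + c_p c_r) w_{pr}` pairwise commute. -/
theorem mElt_comm (π : Equiv.Perm (Fin n) →* A) (c : Fin n → A)
    (hc2 : ∀ p, c p * c p = -1)
    (hcc : ∀ p q, p ≠ q → c p * c q = -(c q * c p))
    (hwc : ∀ (w : Equiv.Perm (Fin n)) (p : Fin n), π w * c p = c (w p) * π w)
    (p q : Fin n) :
    mElt π c p * mElt π c q = mElt π c q * mElt π c p := by
  rcases lt_trichotomy p q with h | h | h
  · exact mElt_comm_of_lt π c hc2 hcc hwc h
  · rw [h]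
  · exact (mElt_comm_of_lt π c hc2 hcc hwc h).symm
end

section
/- In the Sergeev algebra H_n, the elements m_p = Σ_{1 ≤ r < p} (1 + c_p c_r) w_{pr} satisfy: (i) m_p c_q = c_q m_p for p ≠ q and m_p c_p = −c_p m_p; (ii) m_p w_{q,q+1} = w_{q,q+1} m_p whenever p ≠ q, q+1; and (iii) m_p w_{p,p+1} = w_{p,p+1} m_{p+1} − 1 − c_p c_{p+1}. -/
open Equiv

/- We work with the Sergeev algebra `H_n`, the crossed product of the symmetric group
`S_n` with the Clifford algebra on `n` anticommuting generators `c₁,…,c_n` with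
`c_p² = -1`, on which `S_n` acts by permuting the generators.  We phrase statements
universally: in any ring `A` equipped with a multiplicative action `π` of `S_n` and
elements `c p` satisfying the defining relations of `H_n`. -/

variable {A : Type*} [Ring A] {n : ℕ}

lemma aux_comm (c : Fin n → A) (hcc : ∀ p q, p ≠ q → c p * c q = -(c q * c p))
    (p r q : Fin n) (hqp : q ≠ p) (hqr : q ≠ r) :
    (1 + c p * c r) * c q = c q * (1 + c p * c r) := by
  have h : c p * c r * c q = c q * (c p * c r) := by
    calc c p * c r * c q = c p * (c r * c q) := mul_assoc _ _ _
      _ = c p * -(c q * c r) := by rw [hcc r q hqr.symm]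
      _ = -(c p * c q) * c r := by rw [mul_neg, neg_mul, mul_assoc]
      _ = c q * c p * c r := by rw [hcc p q hqp.symm, neg_neg]
      _ = c q * (c p * c r) := mul_assoc _ _ _
  rw [add_mul, mul_add, one_mul, mul_one, h]

lemma aux_comm2 (c : Fin n → A) (hc2 : ∀ p, c p * c p = -1)
    (hcc : ∀ p q, p ≠ q → c p * c q = -(c q * c p)) (p q : Fin n) (hpq : p ≠ q) :
    (1 + c p * c q) * c p = c q * (1 + c p * c q) := by
  have h1 : c p * c q * c p = c q := by
    rw [mul_assoc, hcc q p hpq.symm, mul_neg, ← mul_assoc, hc2 p, neg_mul,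
      neg_neg, one_mul]
  have h2 : c q * (c p * c q) = c p := by
    rw [hcc p q hpq, mul_neg, ← mul_assoc, hc2 q, neg_mul, neg_neg, one_mul]
  rw [add_mul, mul_add, one_mul, mul_one, h1, h2, add_comm]

lemma aux_anticomm (c : Fin n → A) (hc2 : ∀ p, c p * c p = -1) (p r : Fin n) :
    (1 + c p * c r) * c r = -(c p * (1 + c p * c r)) := by
  rw [add_mul, mul_add, one_mul, mul_one, mul_assoc, hc2 r, ← mul_assoc, hc2 p,
    neg_one_mul, mul_neg_one]
  abel

lemma aux_push (π : Equiv.Perm (Fin n) →* A) (c : Fin n → A)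
    (hwc : ∀ (w : Equiv.Perm (Fin n)) (p : Fin n), π w * c p = c (w p) * π w)
    (w : Equiv.Perm (Fin n)) (a b : Fin n) :
    π w * (1 + c a * c b) = (1 + c (w a) * c (w b)) * π w := by
  rw [mul_add, add_mul, mul_one, one_mul, ← mul_assoc, hwc, mul_assoc, hwc,
    ← mul_assoc]

lemma aux_push_term (π : Equiv.Perm (Fin n) →* A) (c : Fin n → A)
    (hwc : ∀ (w : Equiv.Perm (Fin n)) (p : Fin n), π w * c p = c (w p) * π w)
    (s : Equiv.Perm (Fin n)) (p r : Fin n) :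
    π s * ((1 + c p * c r) * π (Equiv.swap p r))
      = (1 + c (s p) * c (s r)) * π (Equiv.swap (s p) (s r)) * π s := by
  rw [← mul_assoc, aux_push π c hwc, mul_assoc, ← map_mul,
    Equiv.mul_swap_eq_swap_mul, map_mul, mul_assoc]


/-- The elements `m_p = Σ_{1 ≤ r < p} (1 + c_p c_r) w_{pr}` of the Sergeev algebra `H_n`
satisfy:
(i)   `m_p c_q = c_q m_p` for `p ≠ q`, and `m_p c_p = -c_p m_p`;
(ii)  `m_p w_{q,q+1} = w_{q,q+1} m_p` whenever `p ≠ q, q+1`;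
(iii) `m_p w_{p,p+1} = w_{p,p+1} m_{p+1} - 1 - c_p c_{p+1}`. -/
theorem mElt_affine_relations (π : Equiv.Perm (Fin n) →* A) (c : Fin n → A)
    (hc2 : ∀ p, c p * c p = -1)
    (hcc : ∀ p q, p ≠ q → c p * c q = -(c q * c p))
    (hwc : ∀ (w : Equiv.Perm (Fin n)) (p : Fin n), π w * c p = c (w p) * π w) :
    (∀ p q : Fin n, p ≠ q → mElt π c p * c q = c q * mElt π c p) ∧
    (∀ p : Fin n, mElt π c p * c p = -(c p * mElt π c p)) ∧
    (∀ p q qs : Fin n, (qs : ℕ) = (q : ℕ) + 1 → p ≠ q → p ≠ qs →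
      mElt π c p * π (Equiv.swap q qs) = π (Equiv.swap q qs) * mElt π c p) ∧
    (∀ p ps : Fin n, (ps : ℕ) = (p : ℕ) + 1 →
      mElt π c p * π (Equiv.swap p ps)
        = π (Equiv.swap p ps) * mElt π c ps - 1 - c p * c ps) := by
  refine ⟨?_, ?_, ?_, ?_⟩
  · -- (i) p ≠ q
    intro p q hpq
    rw [mElt, Finset.sum_mul, Finset.mul_sum]
    refine Finset.sum_congr rfl fun r hr => ?_
    have hrp : r < p := (Finset.mem_filter.mp hr).2
    rw [mul_assoc, hwc]
    by_cases hrq : r = q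
    · subst hrq
      rw [Equiv.swap_apply_right, ← mul_assoc,
        aux_comm2 c hc2 hcc p r (ne_of_gt hrp), mul_assoc]
    · rw [Equiv.swap_apply_of_ne_of_ne hpq.symm (Ne.symm hrq), ← mul_assoc,
        aux_comm c hcc p r q hpq.symm (Ne.symm hrq), mul_assoc]
  · -- (i) q = p
    intro p
    rw [mElt, Finset.sum_mul, Finset.mul_sum, ← Finset.sum_neg_distrib]
    refine Finset.sum_congr rfl fun r hr => ?_
    have hrp : r < p := (Finset.mem_filter.mp hr).2
    rw [mul_assoc, hwc, Equiv.swap_apply_left, ← mul_assoc,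
      aux_anticomm c hc2 p r, neg_mul, mul_assoc]
  · -- (ii)
    intro p q qs hq1 hpq hpqs
    set s := Equiv.swap q qs with hs
    have hlt : ∀ r : Fin n, s r < p ↔ r < p := by
      intro r
      rcases eq_or_ne r q with rfl | hrq
      · rw [hs, Equiv.swap_apply_left]
        simp only [Fin.lt_def]
        have h1 : (p : ℕ) ≠ r := Fin.val_ne_of_ne hpq
        have h2 : (p : ℕ) ≠ qs := Fin.val_ne_of_ne hpqs
        omega
      rcases eq_or_ne r qs with rfl | hrqs
      · rw [hs, Equiv.swap_apply_right]
        simp only [Fin.lt_def]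
        have h1 : (p : ℕ) ≠ q := Fin.val_ne_of_ne hpq
        have h2 : (p : ℕ) ≠ r := Fin.val_ne_of_ne hpqs
        omega
      · rw [hs, Equiv.swap_apply_of_ne_of_ne hrq hrqs]
    have hsp : s p = p := by
      rw [hs, Equiv.swap_apply_of_ne_of_ne hpq hpqs]
    rw [mElt, Finset.sum_mul, Finset.mul_sum]
    symm
    calc ∑ i ∈ Finset.univ.filter (· < p),
          π s * ((1 + c p * c i) * π (Equiv.swap p i))
        = ∑ i ∈ Finset.univ.filter (· < p),
            (1 + c p * c (s i)) * π (Equiv.swap p (s i)) * π s := by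
          refine Finset.sum_congr rfl fun i _ => ?_
          rw [aux_push_term π c hwc, hsp]
      _ = ∑ i ∈ Finset.univ.filter (· < p),
            (1 + c p * c i) * π (Equiv.swap p i) * π s := by
          refine Finset.sum_equiv s (fun i => by simp [hlt i]) fun i _ => rfl

  · -- (iii)
    intro p ps hp1
    set s := Equiv.swap p ps with hs
    have hpps : p ≠ ps := by
      intro h; apply absurd (congrArg Fin.val h); omega
    have hset : Finset.univ.filter (· < ps)
        = insert p (Finset.univ.filter (· < p)) := by
      ext r
      simp only [Finset.mem_insert, Finset.mem_filter, Finset.mem_univ, true_and,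
        Fin.lt_def]
      constructor
      · intro h
        rcases eq_or_ne (r : ℕ) (p : ℕ) with h' | h'
        · exact Or.inl (Fin.ext h')
        · right; omega
      · rintro (rfl | h) <;> omega
    have hkey : π s * mElt π c ps = (1 + c p * c ps) + mElt π c p * π s := by
      rw [mElt, Finset.mul_sum, hset, Finset.sum_insert (by simp), mElt,
        Finset.sum_mul]
      congr 1
      · rw [aux_push_term π c hwc, hs, Equiv.swap_apply_right,
          Equiv.swap_apply_left, ← hs, mul_assoc, ← map_mul, hs,
          Equiv.swap_mul_self, map_one, mul_one]
      · refine Finset.sum_congr rfl fun r hr => ?_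
        have hrp : r < p := (Finset.mem_filter.mp hr).2
        have hsr : s r = r := by
          refine Equiv.swap_apply_of_ne_of_ne (ne_of_lt hrp) ?_
          intro h; subst h
          rw [Fin.lt_def] at hrp; omega
        have hsps : s ps = p := by rw [hs, Equiv.swap_apply_right]
        rw [aux_push_term π c hwc, hsr, hsps]
    rw [hkey]; abel
end

section
/- Let A_n be the degenerate affine Sergeev algebra: it is generated by H_n (the crossed product of S_n with the Clifford algebra on c₁,…,c_n) and pairwise commuting elements x₁,…,x_n subject to x_p w_{q,q+1} = w_{q,q+1} x_p for p ≠ q, q+1; x_p w_{p,p+1} = w_{p,p+1} x_{p+1} − 1 − c_p c_{p+1}; x_p c_q = c_q x_p for p ≠ q; and x_p c_p = −c_p x_p. Define y_p = x_p − Σ_{1 ≤ q < p} (1 + c_p c_q) w_{pq}. Then w y_p w^{-1} = y_{w(p)} for every w ∈ S_n, y_p c_q = c_q y_p for p ≠ q, and y_p c_p = −c_p y_p. -/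
open Equiv

/- The degenerate affine Sergeev algebra `A_n` is generated by the Sergeev algebra `H_n`
(the crossed product of `S_n` with the Clifford algebra on `c₁,…,c_n`, `c_p² = -1`)
together with pairwise commuting elements `x₁,…,x_n`, subject to the relations
`x_p w_{q,q+1} = w_{q,q+1} x_p` for `p ≠ q,q+1`;
`x_p w_{p,p+1} = w_{p,p+1} x_{p+1} - 1 - c_p c_{p+1}`;
`x_p c_q = c_q x_p` for `p ≠ q`; and `x_p c_p = -c_p x_p`.
We phrase statements universally: in any ring `A` with elements `π w`, `c p`, `x p`
satisfying these defining relations. -/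

variable {A : Type*} [Ring A] {n : ℕ}

/-- `y_p = x_p - Σ_{1 ≤ q < p} (1 + c_p c_q) w_{pq}`. -/
noncomputable def yElt (π : Equiv.Perm (Fin n) →* A) (c : Fin n → A) (x : Fin n → A)
    (p : Fin n) : A :=
  x p - ∑ q ∈ Finset.univ.filter (· < p), (1 + c p * c q) * π (Equiv.swap p q)

/-- In the degenerate affine Sergeev algebra `A_n`, the elements
`y_p = x_p - Σ_{q<p} (1 + c_p c_q) w_{pq}` satisfy
`w y_p w⁻¹ = y_{w(p)}` for all `w ∈ S_n`, `y_p c_q = c_q y_p` for `p ≠ q`, and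
`y_p c_p = -c_p y_p`. -/
theorem yElt_relations (π : Equiv.Perm (Fin n) →* A) (c : Fin n → A) (x : Fin n → A)
    (hc2 : ∀ p, c p * c p = -1)
    (hcc : ∀ p q, p ≠ q → c p * c q = -(c q * c p))
    (hwc : ∀ (w : Equiv.Perm (Fin n)) (p : Fin n), π w * c p = c (w p) * π w)
    (hxx : ∀ p q, x p * x q = x q * x p)
    (hxw : ∀ p q qs : Fin n, (qs : ℕ) = (q : ℕ) + 1 → p ≠ q → p ≠ qs →
      x p * π (Equiv.swap q qs) = π (Equiv.swap q qs) * x p)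
    (hxw' : ∀ p ps : Fin n, (ps : ℕ) = (p : ℕ) + 1 →
      x p * π (Equiv.swap p ps) = π (Equiv.swap p ps) * x ps - 1 - c p * c ps)
    (hxc : ∀ p q, p ≠ q → x p * c q = c q * x p)
    (hxc' : ∀ p, x p * c p = -(c p * x p)) :
    (∀ (w : Equiv.Perm (Fin n)) (p : Fin n),
      π w * yElt π c x p * π w⁻¹ = yElt π c x (w p)) ∧
    (∀ p q : Fin n, p ≠ q → yElt π c x p * c q = c q * yElt π c x p) ∧
    (∀ p : Fin n, yElt π c x p * c p = -(c p * yElt π c x p)) := by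
  have hπs2 : ∀ a b : Fin n, π (Equiv.swap a b) * π (Equiv.swap a b) = 1 := by
    intro a b; rw [← map_mul, Equiv.swap_mul_self, map_one]
  have hsw : ∀ (w : Equiv.Perm (Fin n)) (a b : Fin n),
      π w * π (Equiv.swap a b) * π w⁻¹ = π (Equiv.swap (w a) (w b)) := by
    intro w a b
    rw [Equiv.swap_apply_apply, map_mul, map_mul]
  have hconj : ∀ (w : Equiv.Perm (Fin n)) (p r : Fin n),
      π w * ((1 + c p * c r) * π (Equiv.swap p r)) * π w⁻¹
        = (1 + c (w p) * c (w r)) * π (Equiv.swap (w p) (w r)) := by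
    intro w p r
    have h1 : π w * (1 + c p * c r) = (1 + c (w p) * c (w r)) * π w := by
      rw [mul_add, add_mul, mul_one, one_mul, ← mul_assoc, hwc, mul_assoc, hwc, ← mul_assoc]
    rw [← mul_assoc, h1, mul_assoc, mul_assoc, ← mul_assoc (π w), hsw]
  have hred : ∀ (w : Equiv.Perm (Fin n)) (p : Fin n),
      π w * yElt π c x p * π w⁻¹
        = π w * x p * π w⁻¹ - ∑ r ∈ Finset.univ.filter (· < p),
            (1 + c (w p) * c (w r)) * π (Equiv.swap (w p) (w r)) := by
    intro w p
    rw [yElt, mul_sub, sub_mul, Finset.mul_sum, Finset.sum_mul]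
    congr 1
    exact Finset.sum_congr rfl fun r _ => hconj w p r
  have key : ∀ q qs : Fin n, (qs : ℕ) = (q : ℕ) + 1 → ∀ p : Fin n,
      π (Equiv.swap q qs) * yElt π c x p * π (Equiv.swap q qs)⁻¹
        = yElt π c x (Equiv.swap q qs p) := by
    intro q qs hqs p
    have hF : Finset.univ.filter (· < qs) = insert q (Finset.univ.filter (· < q)) := by
      ext r
      simp only [Finset.mem_filter, Finset.mem_insert, Finset.mem_univ, true_and, Fin.lt_def]
      rw [Fin.ext_iff]
      omega
    have hqmem : q ∉ Finset.univ.filter (· < q) := by simp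
    rw [hred, Equiv.swap_inv]
    rcases eq_or_ne q p with rfl | hq1
    · -- p = q
      simp only [Equiv.swap_apply_left]
      have hx : π (Equiv.swap q qs) * x q * π (Equiv.swap q qs)
          = x qs - π (Equiv.swap q qs) - c qs * c q * π (Equiv.swap q qs) := by
        rw [mul_assoc, hxw' q qs hqs, mul_sub, mul_sub, mul_one, ← mul_assoc, hπs2, one_mul,
          ← mul_assoc, hwc, Equiv.swap_apply_left, mul_assoc, hwc, Equiv.swap_apply_right,
          ← mul_assoc]
      have hS : ∑ r ∈ Finset.univ.filter (· < q),
            (1 + c qs * c (Equiv.swap q qs r)) * π (Equiv.swap qs (Equiv.swap q qs r))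
          = ∑ r ∈ Finset.univ.filter (· < q), (1 + c qs * c r) * π (Equiv.swap qs r) := by
        refine Finset.sum_congr rfl fun r hr => ?_
        simp only [Finset.mem_filter, Fin.lt_def] at hr
        have hrq : r ≠ q := Fin.ne_of_val_ne (by omega)
        have hrqs : r ≠ qs := Fin.ne_of_val_ne (by omega)
        rw [Equiv.swap_apply_of_ne_of_ne hrq hrqs]
      rw [hx, hS, yElt, hF, Finset.sum_insert hqmem, Equiv.swap_comm qs q, add_mul, one_mul]
      abel
    · rcases eq_or_ne qs p with rfl | hq2
      · -- p = qs
        simp only [Equiv.swap_apply_right]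
        have h2 : π (Equiv.swap q qs) * x qs
            = x q * π (Equiv.swap q qs) + 1 + c q * c qs := by
          rw [hxw' q qs hqs]; abel
        have hx : π (Equiv.swap q qs) * x qs * π (Equiv.swap q qs)
            = x q + π (Equiv.swap q qs) + c q * c qs * π (Equiv.swap q qs) := by
          rw [h2, add_mul, add_mul, one_mul, mul_assoc (x q), hπs2, mul_one]
        have hS : ∑ r ∈ Finset.univ.filter (· < q),
              (1 + c q * c (Equiv.swap q qs r)) * π (Equiv.swap q (Equiv.swap q qs r))
            = ∑ r ∈ Finset.univ.filter (· < q), (1 + c q * c r) * π (Equiv.swap q r) := by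
          refine Finset.sum_congr rfl fun r hr => ?_
          simp only [Finset.mem_filter, Fin.lt_def] at hr
          have hrq : r ≠ q := Fin.ne_of_val_ne (by omega)
          have hrqs : r ≠ qs := Fin.ne_of_val_ne (by omega)
          rw [Equiv.swap_apply_of_ne_of_ne hrq hrqs]
        rw [hx, hF, Finset.sum_insert hqmem, hS, Equiv.swap_apply_left, yElt, add_mul, one_mul]
        abel
      · -- p ≠ q, qs
        have hp1 : p ≠ q := Ne.symm hq1
        have hp2 : p ≠ qs := Ne.symm hq2
        simp only [Equiv.swap_apply_of_ne_of_ne hp1 hp2]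
        have hx : π (Equiv.swap q qs) * x p * π (Equiv.swap q qs) = x p := by
          rw [mul_assoc, hxw p q qs hqs hp1 hp2, ← mul_assoc, hπs2, one_mul]
        have hS : ∑ r ∈ Finset.univ.filter (· < p),
              (1 + c p * c (Equiv.swap q qs r)) * π (Equiv.swap p (Equiv.swap q qs r))
            = ∑ r ∈ Finset.univ.filter (· < p), (1 + c p * c r) * π (Equiv.swap p r) := by
          apply Finset.sum_equiv (Equiv.swap q qs)
          · intro r
            simp only [Finset.mem_filter, Finset.mem_univ, true_and, Fin.lt_def]
            have hv1 : (p : ℕ) ≠ (q : ℕ) := fun h => hp1 (Fin.ext h)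
            have hv2 : (p : ℕ) ≠ (qs : ℕ) := fun h => hp2 (Fin.ext h)
            rcases eq_or_ne r q with rfl | h1
            · rw [Equiv.swap_apply_left]; omega
            · rcases eq_or_ne r qs with rfl | h2
              · rw [Equiv.swap_apply_right]; omega
              · rw [Equiv.swap_apply_of_ne_of_ne h1 h2]
          · intro r _; rfl
        rw [hx, hS, yElt]
  refine ⟨?_, ?_, ?_⟩
  · intro w p
    obtain ⟨m, rfl⟩ : ∃ m, n = m + 1 := ⟨n - 1, by have := p.pos; omega⟩
    revert p
    have hw : w ∈ Submonoid.closure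
        (Set.range fun i : Fin m ↦ Equiv.swap i.castSucc i.succ) := by
      rw [Equiv.Perm.mclosure_swap_castSucc_succ]; exact Submonoid.mem_top w
    induction hw using Submonoid.closure_induction with
    | mem σ hσ =>
      obtain ⟨i, rfl⟩ := hσ
      exact key i.castSucc i.succ (by simp)
    | one => intro p; simp
    | mul u v hu hv ihu ihv =>
      intro p
      rw [mul_inv_rev, map_mul, map_mul, Equiv.Perm.mul_apply, ← ihu (v p), ← ihv p]
      simp only [mul_assoc]
  · intro p q hpq
    rw [yElt, sub_mul, mul_sub, hxc p q hpq, Finset.sum_mul, Finset.mul_sum]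
    congr 1
    refine Finset.sum_congr rfl fun r hr => ?_
    simp only [Finset.mem_filter] at hr
    have hrp : r ≠ p := ne_of_lt hr.2
    rcases eq_or_ne r q with rfl | hrq
    · have h1 : π (Equiv.swap p r) * c r = c p * π (Equiv.swap p r) := by
        rw [hwc, Equiv.swap_apply_right]
      have e1 : (c p * c r) * c p = c r := by
        rw [mul_assoc, hcc r p hrp, mul_neg, ← mul_assoc, hc2, neg_one_mul, neg_neg]
      have e2 : c r * (c p * c r) = c p := by
        rw [← mul_assoc, hcc r p hrp, neg_mul, mul_assoc, hc2, mul_neg_one, neg_neg]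
      rw [mul_assoc, h1, ← mul_assoc, ← mul_assoc]
      congr 1
      rw [add_mul, one_mul, e1, mul_add, mul_one, e2]
      exact add_comm _ _
    · have hqp : q ≠ p := Ne.symm hpq
      have h1 : π (Equiv.swap p r) * c q = c q * π (Equiv.swap p r) := by
        rw [hwc, Equiv.swap_apply_of_ne_of_ne hqp (Ne.symm hrq)]
      have e3 : (c p * c r) * c q = c q * (c p * c r) := by
        rw [mul_assoc, hcc r q hrq, mul_neg, ← mul_assoc, hcc p q hpq,
          neg_mul, neg_neg, mul_assoc]
      rw [mul_assoc, h1, ← mul_assoc, ← mul_assoc]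
      congr 1
      rw [add_mul, one_mul, mul_add, mul_one, e3]
  · intro p
    rw [yElt, sub_mul, mul_sub, hxc' p, Finset.sum_mul, Finset.mul_sum]
    have hsum : ∑ r ∈ Finset.univ.filter (· < p),
          ((1 + c p * c r) * π (Equiv.swap p r)) * c p
        = ∑ r ∈ Finset.univ.filter (· < p),
          -(c p * ((1 + c p * c r) * π (Equiv.swap p r))) := by
      refine Finset.sum_congr rfl fun r hr => ?_
      simp only [Finset.mem_filter] at hr
      have hrp : r ≠ p := ne_of_lt hr.2
      have h1 : π (Equiv.swap p r) * c p = c r * π (Equiv.swap p r) := by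
        rw [hwc, Equiv.swap_apply_left]
      have e4 : (c p * c r) * c r = -(c p) := by
        rw [mul_assoc, hc2, mul_neg_one]
      have e5 : -(c p) * (c p * c r) = c r := by
        rw [neg_mul, ← mul_assoc, hc2, neg_one_mul, neg_neg]
      rw [mul_assoc, h1, ← mul_assoc, ← neg_mul, ← mul_assoc]
      congr 1
      rw [add_mul, one_mul, e4, mul_add, mul_one, e5]
      exact add_comm _ _
    rw [hsum, Finset.sum_neg_distrib]
    abel
end

section
/- In the degenerate affine Sergeev algebra A_n, the elements y_p = x_p − Σ_{1 ≤ q < p} (1 + c_p c_q) w_{pq} satisfy the commutation relation w_{pq}·[y_p, y_q] = y_p − y_q + c_p c_q (y_p + y_q) for all p ≠ q. -/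
open Equiv

/- The degenerate affine Sergeev algebra `A_n` is generated by the Sergeev algebra `H_n`
(the crossed product of `S_n` with the Clifford algebra on `c₁,…,c_n`, `c_p² = -1`)
together with pairwise commuting elements `x₁,…,x_n`, subject to the relations
`x_p w_{q,q+1} = w_{q,q+1} x_p` for `p ≠ q,q+1`;
`x_p w_{p,p+1} = w_{p,p+1} x_{p+1} - 1 - c_p c_{p+1}`;
`x_p c_q = c_q x_p` for `p ≠ q`; and `x_p c_p = -c_p x_p`.
We phrase statements universally: in any ring `A` with elements `π w`, `c p`, `x p`
satisfying these defining relations. -/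

variable {A : Type*} [Ring A] {n : ℕ}

/-! The elements `y_p` transform covariantly under `S_n`: `w y_p = y_{w p} w`. For an adjacent
transposition this is a direct check against the defining relations (the correction term
`(1 + c_p c_q) w_{pq}` is exactly what absorbs the constant in `x_p w_{p,p+1}`), and adjacent
transpositions generate `S_n`. Conjugating by a permutation sending `0, 1` to `p, q` reduces the
identity to `p = 0`, `q = 1`, where `y_0 = x_0` and `y_1 = x_1 - (1 + c_1 c_0) w_{01}`, and the
identity becomes a computation in the rank-two relations. -/

open Finset

theorem SemiconjBy.symm_of_mul_self {M : Type*} [Monoid M] {s a b : M} (hs : s * s = 1)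
    (h : SemiconjBy s a b) : SemiconjBy s b a :=
  calc s * b = s * (b * s) * s := by rw [mul_assoc, mul_assoc, hs, mul_one]
    _ = a * s := by rw [← h.eq, ← mul_assoc, hs, one_mul]

theorem SemiconjBy.finset_sum_right {ι R : Type*} [NonUnitalNonAssocSemiring R] {a : R}
    {s : Finset ι} {f g : ι → R} (h : ∀ i ∈ s, SemiconjBy a (f i) (g i)) :
    SemiconjBy a (∑ i ∈ s, f i) (∑ i ∈ s, g i) := by
  rw [SemiconjBy, mul_sum, sum_mul]
  exact sum_congr rfl h

theorem Equiv.Perm.exists_apply_eq_and_apply_eq {α : Type*} [DecidableEq α] {a b p q : α}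
    (hab : a ≠ b) (hpq : p ≠ q) : ∃ w : Perm α, w a = p ∧ w b = q := by
  have hqa : swap a p q ≠ a := fun h ↦ hpq (by simpa using congrArg (swap a p) h.symm)
  refine ⟨swap a p * swap b (swap a p q), ?_, ?_⟩
  · rw [Perm.mul_apply, swap_apply_of_ne_of_ne hab hqa.symm, swap_apply_left]
  · rw [Perm.mul_apply, swap_apply_left, swap_apply_self]

theorem Fin.Iio_eq_insert_Iio_of_val_eq_succ {k ks : Fin n} (hks : (ks : ℕ) = k + 1) :
    Iio ks = insert k (Iio k) := by
  ext r
  simp only [mem_Iio, mem_insert, Fin.lt_def, Fin.ext_iff]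
  omega

section swap

variable {α M : Type*} [DecidableEq α] [Monoid M] (π : Perm α →* M)

theorem map_swap_mul_self (a b : α) : π (swap a b) * π (swap a b) = 1 := by
  rw [← map_mul, swap_mul_self, map_one]

theorem semiconjBy_map_swap (w : Perm α) (a b : α) :
    SemiconjBy (π w) (π (swap a b)) (π (swap (w a) (w b))) := by
  rw [SemiconjBy, swap_apply_apply, ← map_mul, ← map_mul, inv_mul_cancel_right]

end swap

section twistedSwap

variable (π : Perm (Fin n) →* A) (c x : Fin n → A)

def twistedSwap (p r : Fin n) : A :=
  (1 + c p * c r) * π (swap p r)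

theorem yElt_eq_sub_sum_twistedSwap (p : Fin n) :
    yElt π c x p = x p - ∑ r ∈ Iio p, twistedSwap π c p r := by
  rw [yElt, filter_gt_eq_Iio]
  rfl

theorem twistedSwap_mul_swap (p r : Fin n) :
    twistedSwap π c p r * π (swap p r) = 1 + c p * c r := by
  rw [twistedSwap, mul_assoc, map_swap_mul_self, mul_one]

variable {π c x}

theorem semiconjBy_perm_twistedSwap (hwc : ∀ w p, SemiconjBy (π w) (c p) (c (w p)))
    (w : Perm (Fin n)) (p r : Fin n) :
    SemiconjBy (π w) (twistedSwap π c p r) (twistedSwap π c (w p) (w r)) :=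
  ((SemiconjBy.one_right _).add_right ((hwc w p).mul_right (hwc w r))).mul_right
    (semiconjBy_map_swap π w p r)

theorem semiconjBy_swap_x_succ {k ks : Fin n} (hks : (ks : ℕ) = k + 1)
    (hxw' : ∀ p ps : Fin n, (ps : ℕ) = (p : ℕ) + 1 →
      x p * π (swap p ps) = π (swap p ps) * x ps - 1 - c p * c ps) :
    SemiconjBy (π (swap k ks)) (x ks) (x k + twistedSwap π c k ks) := by
  rw [SemiconjBy, add_mul, twistedSwap_mul_swap, hxw' k ks hks]
  abel

theorem semiconjBy_swap_x {k ks : Fin n} (hks : (ks : ℕ) = k + 1)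
    (hwc : ∀ w p, SemiconjBy (π w) (c p) (c (w p)))
    (hxw' : ∀ p ps : Fin n, (ps : ℕ) = (p : ℕ) + 1 →
      x p * π (swap p ps) = π (swap p ps) * x ps - 1 - c p * c ps) :
    SemiconjBy (π (swap k ks)) (x k) (x ks - twistedSwap π c ks k) := by
  have h := ((semiconjBy_swap_x_succ hks hxw').symm_of_mul_self
    (map_swap_mul_self π k ks)).sub_right (semiconjBy_perm_twistedSwap hwc (swap k ks) k ks)
  rwa [add_sub_cancel_right, swap_apply_left, swap_apply_right] at h

end twistedSwap

theorem swap_mul_commutator_eq {s u v X Y : A} (hs : s * s = 1)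
    (hsu : s * u = v * s) (hXu : X * u = v * X) (hXY : X * Y = Y * X) (hXs : X * s = s * Y - v) :
    s * (X * (Y - u * s) - (Y - u * s) * X) = v * X - u * Y + u * u * s := by
  have hsv : s * v = u * s := SemiconjBy.symm_of_mul_self hs hsu
  have hsY : s * Y = X * s + v := by rw [hXs, sub_add_cancel]
  have hsX : s * X = Y * s - u := by
    calc s * X = s * (X * s) * s := by rw [mul_assoc, mul_assoc, hs, mul_one]
      _ = Y * s - u := by
        rw [hXs, mul_sub, ← mul_assoc, hs, one_mul, sub_mul, hsv, mul_assoc, hs, mul_one]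
  have h1 : s * u * Y * s = v * X + v * (v * s) := by
    rw [hsu, mul_assoc v s Y, hsY, mul_assoc, add_mul, mul_assoc X, hs, mul_one, mul_add]
  have h2 : s * u * u = v * (v * s) := by rw [hsu, mul_assoc, hsu]
  have h3 : s * v * (s * Y) = u * Y := by rw [hsv, mul_assoc, ← mul_assoc s s, hs, one_mul]
  have h4 : s * v * v = u * (u * s) := by rw [hsv, mul_assoc, hsv]
  calc s * (X * (Y - u * s) - (Y - u * s) * X)
      = s * (u * (s * X) - X * u * s) := by rw [mul_sub X, hXY]; noncomm_ring
    _ = s * u * Y * s - s * u * u - s * v * (s * Y) + s * v * v := by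
        rw [hsX, hXu, mul_assoc v, hXs]; noncomm_ring
    _ = v * X - u * Y + u * u * s := by rw [h1, h2, h3, h4]; noncomm_ring

theorem sergeev_rank_two_identity {s a b X Y : A} (hs : s * s = 1)
    (hsa : s * a = b * s) (hba : b * a = -(a * b)) (hXa : X * a = -(a * X)) (hXb : X * b = b * X)
    (hXY : X * Y = Y * X) (hXs : X * s = s * Y - 1 - a * b) :
    s * (X * (Y - (1 + b * a) * s) - (Y - (1 + b * a) * s) * X)
      = X - (Y - (1 + b * a) * s) + a * b * (X + (Y - (1 + b * a) * s)) := by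
  have hsb : s * b = a * s := SemiconjBy.symm_of_mul_self hs hsa
  have hsu : s * (1 + b * a) = (1 + a * b) * s := by
    rw [mul_add, ← mul_assoc, hsb, mul_assoc, hsa]; noncomm_ring
  have hXu : X * (1 + b * a) = (1 + a * b) * X := by
    rw [mul_add, ← mul_assoc, hXb, mul_assoc, hXa, mul_neg, ← mul_assoc, hba]; noncomm_ring
  rw [swap_mul_commutator_eq hs hsu hXu hXY (by rw [hXs, sub_sub]), hba]
  noncomm_ring

section covariance

variable {π : Perm (Fin n) →* A} {c x : Fin n → A}

theorem semiconjBy_swap_succ_yElt {k ks : Fin n} (hks : (ks : ℕ) = k + 1)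
    (hwc : ∀ w p, SemiconjBy (π w) (c p) (c (w p)))
    (hxw : ∀ p q qs : Fin n, (qs : ℕ) = (q : ℕ) + 1 → p ≠ q → p ≠ qs →
      x p * π (swap q qs) = π (swap q qs) * x p)
    (hxw' : ∀ p ps : Fin n, (ps : ℕ) = (p : ℕ) + 1 →
      x p * π (swap p ps) = π (swap p ps) * x ps - 1 - c p * c ps) (p : Fin n) :
    SemiconjBy (π (swap k ks)) (yElt π c x p) (yElt π c x (swap k ks p)) := by
  have hT := semiconjBy_perm_twistedSwap hwc (swap k ks)
  have hfix : ∀ r ∈ Iio k, swap k ks r = r := fun r hr ↦ by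
    rw [mem_Iio, Fin.lt_def] at hr
    exact swap_apply_of_ne_of_ne (by omega) (by omega)
  have hIio := Fin.Iio_eq_insert_Iio_of_val_eq_succ hks
  simp only [yElt_eq_sub_sum_twistedSwap]
  rcases eq_or_ne p k with rfl | hpk
  · rw [swap_apply_left, hIio, sum_insert notMem_Iio_self, ← sub_sub]
    refine (semiconjBy_swap_x hks hwc hxw').sub_right (SemiconjBy.finset_sum_right fun r hr ↦ ?_)
    simpa only [swap_apply_left, hfix r hr] using hT p r
  rcases eq_or_ne p ks with rfl | hpks
  · have hsum : SemiconjBy (π (swap k p)) (∑ r ∈ Iio k, twistedSwap π c p r)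
        (∑ r ∈ Iio k, twistedSwap π c k r) :=
      SemiconjBy.finset_sum_right fun r hr ↦ by
        simpa only [swap_apply_right, hfix r hr] using hT p r
    have h := ((semiconjBy_swap_x_succ hks hxw').sub_right (hT p k)).sub_right hsum
    rw [swap_apply_left, swap_apply_right, add_sub_cancel_right] at h
    rwa [swap_apply_right, hIio, sum_insert notMem_Iio_self, ← sub_sub]
  · rw [swap_apply_of_ne_of_ne hpk hpks]
    refine SemiconjBy.sub_right (hxw p k ks hks hpk hpks).symm ?_
    have hmem : ∀ r, r ∈ Iio p ↔ swap k ks r ∈ Iio p := by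
      intro r
      simp only [mem_Iio, Fin.lt_def, swap_apply_def]
      split_ifs <;> simp_all [Fin.ext_iff] <;> omega
    have h := SemiconjBy.finset_sum_right fun r (_ : r ∈ Iio p) ↦ hT p r
    rwa [swap_apply_of_ne_of_ne hpk hpks, sum_equiv (swap k ks) hmem fun _ _ ↦ rfl] at h

end covariance

theorem semiconjBy_perm_yElt {m : ℕ} {π : Perm (Fin (m + 1)) →* A} {c x : Fin (m + 1) → A}
    (hwc : ∀ w p, SemiconjBy (π w) (c p) (c (w p)))
    (hxw : ∀ p q qs : Fin (m + 1), (qs : ℕ) = (q : ℕ) + 1 → p ≠ q → p ≠ qs →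
      x p * π (swap q qs) = π (swap q qs) * x p)
    (hxw' : ∀ p ps : Fin (m + 1), (ps : ℕ) = (p : ℕ) + 1 →
      x p * π (swap p ps) = π (swap p ps) * x ps - 1 - c p * c ps)
    (w : Perm (Fin (m + 1))) (p : Fin (m + 1)) :
    SemiconjBy (π w) (yElt π c x p) (yElt π c x (w p)) := by
  have hw : w ∈ Submonoid.closure (Set.range fun i : Fin m ↦ swap i.castSucc i.succ) := by
    rw [Perm.mclosure_swap_castSucc_succ]
    trivial
  induction hw using Submonoid.closure_induction generalizing p with
  | mem _ hg =>
    obtain ⟨i, rfl⟩ := hg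
    exact semiconjBy_swap_succ_yElt (by simp) hwc hxw hxw' p
  | one => exact (map_one π).symm ▸ SemiconjBy.one_left _
  | mul a b _ _ iha ihb =>
    rw [map_mul]
    exact (iha (b p)).mul_left (ihb p)

theorem yElt_commutation_zero_one {m : ℕ} {π : Perm (Fin (m + 2)) →* A}
    {c x : Fin (m + 2) → A}
    (hcc : ∀ p q, p ≠ q → c p * c q = -(c q * c p))
    (hwc : ∀ w p, SemiconjBy (π w) (c p) (c (w p)))
    (hxx : ∀ p q, x p * x q = x q * x p)
    (hxw' : ∀ p ps : Fin (m + 2), (ps : ℕ) = (p : ℕ) + 1 →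
      x p * π (swap p ps) = π (swap p ps) * x ps - 1 - c p * c ps)
    (hxc : ∀ p q, p ≠ q → x p * c q = c q * x p)
    (hxc' : ∀ p, x p * c p = -(c p * x p)) :
    π (swap 0 1) * (yElt π c x 0 * yElt π c x 1 - yElt π c x 1 * yElt π c x 0)
      = yElt π c x 0 - yElt π c x 1 + c 0 * c 1 * (yElt π c x 0 + yElt π c x 1) := by
  have h01 : (0 : Fin (m + 2)) ≠ 1 := Fin.zero_ne_one
  have hIio0 : Iio (0 : Fin (m + 2)) = ∅ := by rw [← bot_eq_zero, Iio_bot]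
  have hy0 : yElt π c x 0 = x 0 := by
    rw [yElt_eq_sub_sum_twistedSwap, hIio0, sum_empty, sub_zero]
  have hy1 : yElt π c x 1 = x 1 - (1 + c 1 * c 0) * π (swap 0 1) := by
    rw [yElt_eq_sub_sum_twistedSwap, Fin.Iio_eq_insert_Iio_of_val_eq_succ (k := 0) (by simp),
      sum_insert notMem_Iio_self, hIio0, sum_empty, add_zero, twistedSwap, swap_comm]
  rw [hy0, hy1]
  exact sergeev_rank_two_identity (map_swap_mul_self π 0 1) (by simpa using (hwc (swap 0 1) 0).eq)
    (hcc 1 0 h01.symm) (hxc' 0) (hxc 0 1 h01) (hxx 0 1) (hxw' 0 1 (by simp))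

theorem yElt_commutation_general (π : Equiv.Perm (Fin n) →* A) (c : Fin n → A) (x : Fin n → A)
    (hcc : ∀ p q, p ≠ q → c p * c q = -(c q * c p))
    (hwc : ∀ (w : Equiv.Perm (Fin n)) (p : Fin n), π w * c p = c (w p) * π w)
    (hxx : ∀ p q, x p * x q = x q * x p)
    (hxw : ∀ p q qs : Fin n, (qs : ℕ) = (q : ℕ) + 1 → p ≠ q → p ≠ qs →
      x p * π (Equiv.swap q qs) = π (Equiv.swap q qs) * x p)
    (hxw' : ∀ p ps : Fin n, (ps : ℕ) = (p : ℕ) + 1 →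
      x p * π (Equiv.swap p ps) = π (Equiv.swap p ps) * x ps - 1 - c p * c ps)
    (hxc : ∀ p q, p ≠ q → x p * c q = c q * x p)
    (hxc' : ∀ p, x p * c p = -(c p * x p))
    (p q : Fin n) (hpq : p ≠ q) :
    π (Equiv.swap p q) * (yElt π c x p * yElt π c x q - yElt π c x q * yElt π c x p)
      = yElt π c x p - yElt π c x q
        + c p * c q * (yElt π c x p + yElt π c x q) := by
  obtain ⟨m, rfl⟩ : ∃ m, n = m + 2 := ⟨n - 2, by have := p.isLt; have := q.isLt; omega⟩
  obtain ⟨w, rfl, rfl⟩ := Perm.exists_apply_eq_and_apply_eq Fin.zero_ne_one hpq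
  have hc : ∀ w p, SemiconjBy (π w) (c p) (c (w p)) := hwc
  have hy := semiconjBy_perm_yElt hc hxw hxw' w
  have hlhs := (semiconjBy_map_swap π w 0 1).mul_right
    (((hy 0).mul_right (hy 1)).sub_right ((hy 1).mul_right (hy 0)))
  have hrhs := ((hy 0).sub_right (hy 1)).add_right
    (((hc w 0).mul_right (hc w 1)).mul_right ((hy 0).add_right (hy 1)))
  rw [yElt_commutation_zero_one hcc hc hxx hxw' hxc hxc'] at hlhs
  exact ((Group.isUnit w).map π).mul_right_cancel (hlhs.eq.symm.trans hrhs.eq)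

/-- In the degenerate affine Sergeev algebra `A_n`, the elements
`y_p = x_p - Σ_{q<p} (1 + c_p c_q) w_{pq}` satisfy
`w_{pq}·[y_p, y_q] = y_p - y_q + c_p c_q (y_p + y_q)` for all `p ≠ q`. -/
theorem yElt_commutation (π : Equiv.Perm (Fin n) →* A) (c : Fin n → A) (x : Fin n → A)
    (hc2 : ∀ p, c p * c p = -1)
    (hcc : ∀ p q, p ≠ q → c p * c q = -(c q * c p))
    (hwc : ∀ (w : Equiv.Perm (Fin n)) (p : Fin n), π w * c p = c (w p) * π w)
    (hxx : ∀ p q, x p * x q = x q * x p)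
    (hxw : ∀ p q qs : Fin n, (qs : ℕ) = (q : ℕ) + 1 → p ≠ q → p ≠ qs →
      x p * π (Equiv.swap q qs) = π (Equiv.swap q qs) * x p)
    (hxw' : ∀ p ps : Fin n, (ps : ℕ) = (p : ℕ) + 1 →
      x p * π (Equiv.swap p ps) = π (Equiv.swap p ps) * x ps - 1 - c p * c ps)
    (hxc : ∀ p q, p ≠ q → x p * c q = c q * x p)
    (hxc' : ∀ p, x p * c p = -(c p * x p))
    (p q : Fin n) (hpq : p ≠ q) :
    π (Equiv.swap p q) * (yElt π c x p * yElt π c x q - yElt π c x q * yElt π c x p)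
      = yElt π c x p - yElt π c x q
        + c p * c q * (yElt π c x p + yElt π c x q) :=
  yElt_commutation_general π c x hcc hwc hxx hxw hxw' hxc hxc' p q hpq
end

section
/- For each m ≥ 0 the assignment γ_m: w_{pq} ↦ w_{m+p,m+q}, c_p ↦ c_{m+p}, x_p ↦ Σ_{1 ≤ r < m+p} (1 + c_{m+p} c_r) w_{m+p,r} defines an algebra homomorphism from the degenerate affine Sergeev algebra A_n into the Sergeev algebra H_{m+n}, i.e. these assignments preserve all defining relations of A_n. -/
open Equiv

/- For `m ≥ 0`, the assignment `γ_m : w_{pq} ↦ w_{m+p,m+q}, c_p ↦ c_{m+p},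
x_p ↦ Σ_{1 ≤ r < m+p} (1 + c_{m+p} c_r) w_{m+p,r}` defines an algebra homomorphism from
the degenerate affine Sergeev algebra `A_n` into the Sergeev algebra `H_{m+n}`, i.e.
these assignments preserve all defining relations of `A_n`.  We phrase this universally:
in any ring `A` with elements `π w`, `c p` satisfying the defining relations of
`H_{m+n}`, the images satisfy all the defining relations of `A_n`. -/

variable {A : Type*} [Ring A]

/-- The image of `x_p` under `γ_m`. -/
noncomputable def gammaX {m n : ℕ} (π : Equiv.Perm (Fin (m + n)) →* A)
    (c : Fin (m + n) → A) (p : Fin n) : A :=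
  ∑ r ∈ Finset.univ.filter (fun r : Fin (m + n) => (r : ℕ) < m + (p : ℕ)),
    (1 + c (Fin.natAdd m p) * c r) * π (Equiv.swap (Fin.natAdd m p) r)

section helpers

variable {N : ℕ} (π : Equiv.Perm (Fin N) →* A) (c : Fin N → A)

/-- Generic Jucys–Murphy type sum. -/
noncomputable def Ysum (b : Fin N) : A :=
  ∑ r ∈ Finset.univ.filter (fun r : Fin N => (r : ℕ) < (b : ℕ)),
    (1 + c b * c r) * π (Equiv.swap b r)

lemma key1 {x y : A} (hx : x * x = -1) (hy : y * y = -1) (hxy : x * y = -(y * x)) :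
    y * (1 + x * y) = (1 + x * y) * x := by
  have h1 : y * x = -(x * y) := by rw [hxy, neg_neg]
  have e1 : y * (x * y) = x := by
    rw [← mul_assoc, h1, neg_mul, mul_assoc, hy, mul_neg_one, neg_neg]
  have e2 : (x * y) * x = y := by
    rw [hxy, neg_mul, mul_assoc, hx, mul_neg_one, neg_neg]
  rw [mul_add, mul_one, e1, add_mul, one_mul, e2, add_comm]

lemma key2 {x y z : A} (hzx : z * x = -(x * z)) (hzy : z * y = -(y * z)) :
    z * (1 + x * y) = (1 + x * y) * z := by
  have : z * (x * y) = (x * y) * z := by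
    rw [← mul_assoc, hzx, neg_mul, mul_assoc, hzy, mul_neg, neg_neg, ← mul_assoc]
  rw [mul_add, mul_one, add_mul, one_mul, this]

lemma key3 {x y : A} (hx : x * x = -1) (hy : y * y = -1) :
    (1 + x * y) * y = -(x * (1 + x * y)) := by
  have e1 : (x * y) * y = -x := by rw [mul_assoc, hy, mul_neg_one]
  have e2 : x * (x * y) = -y := by rw [← mul_assoc, hx, neg_one_mul]
  rw [add_mul, one_mul, e1, mul_add, mul_one, e2, neg_add, neg_neg, add_comm]

lemma key2' {x y z : A} (hx : x * z = z * x) (hy : y * z = z * y) :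
    (1 + x * y) * z = z * (1 + x * y) := by
  rw [add_mul, one_mul, mul_add, mul_one, mul_assoc, hy, ← mul_assoc, hx, mul_assoc]

variable (hwc : ∀ (w : Equiv.Perm (Fin N)) (p : Fin N), π w * c p = c (w p) * π w)

include hwc

lemma conj_term (σ : Equiv.Perm (Fin N)) (b r : Fin N) :
    π σ * ((1 + c b * c r) * π (Equiv.swap b r))
      = (1 + c (σ b) * c (σ r)) * π (Equiv.swap (σ b) (σ r)) * π σ := by
  have h1 : π σ * (1 + c b * c r) = (1 + c (σ b) * c (σ r)) * π σ := by
    rw [mul_add, mul_one, add_mul, one_mul, ← mul_assoc, hwc, mul_assoc, hwc, ← mul_assoc]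
  have h2 : π σ * π (Equiv.swap b r) = π (Equiv.swap (σ b) (σ r)) * π σ := by
    rw [← map_mul, ← map_mul, Equiv.mul_swap_eq_swap_mul]
  rw [← mul_assoc, h1, mul_assoc, h2, ← mul_assoc]

lemma conj_Y (σ : Equiv.Perm (Fin N)) (b : Fin N) (hfix : σ b = b)
    (hmem : ∀ r : Fin N, ((σ r : Fin N) : ℕ) < (b : ℕ) ↔ (r : ℕ) < (b : ℕ)) :
    π σ * Ysum π c b = Ysum π c b * π σ := by
  rw [Ysum, Finset.mul_sum, Finset.sum_mul]
  refine Finset.sum_equiv σ (fun r => ?_) (fun r _ => ?_)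
  · simp only [Finset.mem_filter, Finset.mem_univ, true_and]
    exact (hmem r).symm
  · rw [conj_term π c hwc, hfix]

variable (hc2 : ∀ p, c p * c p = -1)
    (hcc : ∀ p q, p ≠ q → c p * c q = -(c q * c p))

include hc2 hcc

lemma Y_comm_c (b u : Fin N) (hub : u ≠ b) :
    c u * Ysum π c b = Ysum π c b * c u := by
  rw [Ysum, Finset.mul_sum, Finset.sum_mul]
  refine Finset.sum_congr rfl fun r hr => ?_
  simp only [Finset.mem_filter, Finset.mem_univ, true_and] at hr
  have hrb : r ≠ b := fun h => absurd hr (by rw [h]; exact lt_irrefl _)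
  have hs : π (Equiv.swap b r) * c u = c (Equiv.swap b r u) * π (Equiv.swap b r) := hwc _ _
  by_cases hur : u = r
  · subst hur
    rw [Equiv.swap_apply_right] at hs
    calc c u * ((1 + c b * c u) * π (Equiv.swap b u))
        = (c u * (1 + c b * c u)) * π (Equiv.swap b u) := by rw [mul_assoc]
      _ = ((1 + c b * c u) * c b) * π (Equiv.swap b u) := by
          rw [key1 (hc2 b) (hc2 u) (hcc b u (Ne.symm hub))]
      _ = (1 + c b * c u) * (c b * π (Equiv.swap b u)) := by rw [mul_assoc]
      _ = (1 + c b * c u) * (π (Equiv.swap b u) * c u) := by rw [hs]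
      _ = (1 + c b * c u) * π (Equiv.swap b u) * c u := by rw [mul_assoc]
  · rw [Equiv.swap_apply_of_ne_of_ne hub hur] at hs
    calc c u * ((1 + c b * c r) * π (Equiv.swap b r))
        = (c u * (1 + c b * c r)) * π (Equiv.swap b r) := by rw [mul_assoc]
      _ = ((1 + c b * c r) * c u) * π (Equiv.swap b r) := by
          rw [key2 (hcc u b hub) (hcc u r hur)]
      _ = (1 + c b * c r) * (π (Equiv.swap b r) * c u) := by rw [mul_assoc, hs]
      _ = (1 + c b * c r) * π (Equiv.swap b r) * c u := by rw [mul_assoc]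

omit hc2 hcc in
lemma Y_comm_swap (b u v : Fin N) (hu : (u : ℕ) < (b : ℕ)) (hv : (v : ℕ) < (b : ℕ))
    (huv : u ≠ v) :
    π (Equiv.swap u v) * Ysum π c b = Ysum π c b * π (Equiv.swap u v) := by
  have hbu : b ≠ u := fun h => absurd hu (by rw [h]; exact lt_irrefl _)
  have hbv : b ≠ v := fun h => absurd hv (by rw [h]; exact lt_irrefl _)
  refine conj_Y π c hwc _ _ (Equiv.swap_apply_of_ne_of_ne hbu hbv) fun r => ?_
  by_cases hru : r = u
  · subst hru; rw [Equiv.swap_apply_left]; exact ⟨fun _ => hu, fun _ => hv⟩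
  by_cases hrv : r = v
  · subst hrv; rw [Equiv.swap_apply_right]; exact ⟨fun _ => hv, fun _ => hu⟩
  · rw [Equiv.swap_apply_of_ne_of_ne hru hrv]

lemma Y_comm_Y (a b : Fin N) (hab : (a : ℕ) < (b : ℕ)) :
    Ysum π c a * Ysum π c b = Ysum π c b * Ysum π c a := by
  rw [Ysum, Finset.sum_mul, Finset.mul_sum]
  refine Finset.sum_congr rfl fun r hr => ?_
  simp only [Finset.mem_filter, Finset.mem_univ, true_and] at hr
  have hrb : (r : ℕ) < (b : ℕ) := hr.trans hab
  have hab' : a ≠ b := fun h => absurd hab (by rw [h]; exact lt_irrefl _)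
  have hrb' : r ≠ b := fun h => absurd hrb (by rw [h]; exact lt_irrefl _)
  have har : a ≠ r := fun h => absurd hr (by rw [← h]; exact lt_irrefl _)
  have hca := Y_comm_c π c hwc hc2 hcc b a hab'
  have hcr := Y_comm_c π c hwc hc2 hcc b r hrb'
  have h1 : (1 + c a * c r) * Ysum π c b = Ysum π c b * (1 + c a * c r) :=
    key2' hca hcr
  have hsw := Y_comm_swap π c hwc b a r hab hrb har
  calc (1 + c a * c r) * π (Equiv.swap a r) * Ysum π c b
      = (1 + c a * c r) * (π (Equiv.swap a r) * Ysum π c b) := by rw [mul_assoc]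
    _ = (1 + c a * c r) * Ysum π c b * π (Equiv.swap a r) := by rw [hsw, mul_assoc]
    _ = Ysum π c b * ((1 + c a * c r) * π (Equiv.swap a r)) := by rw [h1, mul_assoc]

end helpers

section step

variable {N : ℕ} (π : Equiv.Perm (Fin N) →* A) (c : Fin N → A)
variable (hwc : ∀ (w : Equiv.Perm (Fin N)) (p : Fin N), π w * c p = c (w p) * π w)
include hwc

lemma Y_step (b b' : Fin N) (hb' : (b' : ℕ) = (b : ℕ) + 1) :
    Ysum π c b * π (Equiv.swap b b')
      = π (Equiv.swap b b') * Ysum π c b' - 1 - c b * c b' := by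
  have hne : b ≠ b' := fun h => by rw [h] at hb'; omega
  have hset : Finset.univ.filter (fun r : Fin N => (r : ℕ) < (b' : ℕ))
      = insert b (Finset.univ.filter (fun r : Fin N => (r : ℕ) < (b : ℕ))) := by
    ext r
    simp only [Finset.mem_filter, Finset.mem_univ, true_and, Finset.mem_insert, Fin.ext_iff, hb']
    omega
  have hmain : π (Equiv.swap b b') * Ysum π c b'
      = (1 + c b * c b') + Ysum π c b * π (Equiv.swap b b') := by
    rw [Ysum, Finset.mul_sum, hset, Finset.sum_insert (by simp)]
    congr 1
    · rw [conj_term π c hwc, Equiv.swap_apply_right, Equiv.swap_apply_left,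
        mul_assoc, ← map_mul, Equiv.swap_mul_self, map_one, mul_one]
    · rw [Ysum, Finset.sum_mul]
      refine Finset.sum_congr rfl fun r hr => ?_
      simp only [Finset.mem_filter, Finset.mem_univ, true_and] at hr
      have hrb : r ≠ b := fun h => absurd hr (by rw [h]; exact lt_irrefl _)
      have hrb' : r ≠ b' := fun h => by rw [h] at hr; omega
      rw [conj_term π c hwc, Equiv.swap_apply_right,
        Equiv.swap_apply_of_ne_of_ne hrb hrb']
  rw [hmain]
  abel

end step


/-- `γ_m` preserves all the defining relations of the degenerate affine Sergeev algebra
`A_n`: writing `C p = c_{m+p}`, `W p q = w_{m+p,m+q}` and `X p = γ_m(x_p)`, the elements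
`C`, `W`, `X` of `H_{m+n}` satisfy the Clifford relations, the equivariance relations,
and all the `x`-relations of `A_n`. -/
theorem gamma_hom {m n : ℕ} (π : Equiv.Perm (Fin (m + n)) →* A) (c : Fin (m + n) → A)
    (hc2 : ∀ p, c p * c p = -1)
    (hcc : ∀ p q, p ≠ q → c p * c q = -(c q * c p))
    (hwc : ∀ (w : Equiv.Perm (Fin (m + n))) (p : Fin (m + n)), π w * c p = c (w p) * π w) :
    -- Clifford relations for the images of the `c_p`
    (∀ p : Fin n, c (Fin.natAdd m p) * c (Fin.natAdd m p) = -1) ∧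
    (∀ p q : Fin n, p ≠ q →
      c (Fin.natAdd m p) * c (Fin.natAdd m q) = -(c (Fin.natAdd m q) * c (Fin.natAdd m p))) ∧
    -- equivariance relations for the images of the transpositions
    (∀ p q r : Fin n, p ≠ q →
      π (Equiv.swap (Fin.natAdd m p) (Fin.natAdd m q)) * c (Fin.natAdd m r)
        = c (Equiv.swap (Fin.natAdd m p) (Fin.natAdd m q) (Fin.natAdd m r))
            * π (Equiv.swap (Fin.natAdd m p) (Fin.natAdd m q))) ∧
    -- the images of the `x_p` pairwise commute
    (∀ p q : Fin n, gammaX π c p * gammaX π c q = gammaX π c q * gammaX π c p) ∧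
    -- `x_p w_{q,q+1} = w_{q,q+1} x_p` for `p ≠ q, q+1`
    (∀ p q qs : Fin n, (qs : ℕ) = (q : ℕ) + 1 → p ≠ q → p ≠ qs →
      gammaX π c p * π (Equiv.swap (Fin.natAdd m q) (Fin.natAdd m qs))
        = π (Equiv.swap (Fin.natAdd m q) (Fin.natAdd m qs)) * gammaX π c p) ∧
    -- `x_p w_{p,p+1} = w_{p,p+1} x_{p+1} - 1 - c_p c_{p+1}`
    (∀ p ps : Fin n, (ps : ℕ) = (p : ℕ) + 1 →
      gammaX π c p * π (Equiv.swap (Fin.natAdd m p) (Fin.natAdd m ps))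
        = π (Equiv.swap (Fin.natAdd m p) (Fin.natAdd m ps)) * gammaX π c ps
            - 1 - c (Fin.natAdd m p) * c (Fin.natAdd m ps)) ∧
    -- `x_p c_q = c_q x_p` for `p ≠ q`
    (∀ p q : Fin n, p ≠ q →
      gammaX π c p * c (Fin.natAdd m q) = c (Fin.natAdd m q) * gammaX π c p) ∧
    -- `x_p c_p = -c_p x_p`
    (∀ p : Fin n,
      gammaX π c p * c (Fin.natAdd m p) = -(c (Fin.natAdd m p) * gammaX π c p)) := by
  have hinj : ∀ p q : Fin n, p ≠ q → Fin.natAdd m p ≠ Fin.natAdd m q := by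
    intro p q h hh
    exact h (Fin.ext (by have := congrArg Fin.val hh; simpa using this))
  have hvne : ∀ p q : Fin n, p ≠ q → (p : ℕ) ≠ (q : ℕ) := fun p q h hh => h (Fin.ext hh)
  have hgx : ∀ p : Fin n, gammaX π c p = Ysum π c (Fin.natAdd m p) := fun p => rfl
  refine ⟨fun p => hc2 _, fun p q h => hcc _ _ (hinj p q h), fun p q r h => hwc _ _,
    ?_, ?_, ?_, ?_, ?_⟩
  · -- commuting x's
    intro p q
    rcases Nat.lt_trichotomy (p : ℕ) (q : ℕ) with h | h | h
    · rw [hgx, hgx]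
      exact Y_comm_Y π c hwc hc2 hcc _ _ (by simpa using Nat.add_lt_add_left h m)
    · rw [Fin.ext h]
    · rw [hgx, hgx]
      exact (Y_comm_Y π c hwc hc2 hcc _ _ (by simpa using Nat.add_lt_add_left h m)).symm
  · -- x_p commutes with w_{q,q+1}
    intro p q qs hqs hpq hpqs
    rw [hgx]
    refine (conj_Y π c hwc (Equiv.swap (Fin.natAdd m q) (Fin.natAdd m qs)) (Fin.natAdd m p) ?_ ?_).symm
    · exact Equiv.swap_apply_of_ne_of_ne (hinj p q hpq) (hinj p qs hpqs)
    · intro r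
      have h1 : (p : ℕ) ≠ (q : ℕ) := hvne _ _ hpq
      have h2 : (p : ℕ) ≠ (qs : ℕ) := hvne _ _ hpqs
      by_cases hr1 : r = Fin.natAdd m q
      · subst hr1
        rw [Equiv.swap_apply_left]
        simp only [Fin.coe_natAdd]
        omega
      by_cases hr2 : r = Fin.natAdd m qs
      · subst hr2
        rw [Equiv.swap_apply_right]
        simp only [Fin.coe_natAdd]
        omega
      · rw [Equiv.swap_apply_of_ne_of_ne hr1 hr2]
  · -- the step relation
    intro p ps hps
    rw [hgx, hgx]
    exact Y_step π c hwc _ _ (by simp [hps]; omega)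
  · -- x_p commutes with c_q
    intro p q h
    rw [hgx]
    exact (Y_comm_c π c hwc hc2 hcc _ _ (hinj q p h.symm)).symm
  · -- x_p anticommutes with c_p
    intro p
    rw [hgx, Ysum, Finset.sum_mul, Finset.mul_sum, ← Finset.sum_neg_distrib]
    refine Finset.sum_congr rfl fun r hr => ?_
    simp only [Finset.mem_filter, Finset.mem_univ, true_and] at hr
    set b := Fin.natAdd m p
    have hrb : r ≠ b := fun h => absurd hr (by rw [h]; exact lt_irrefl _)
    have hs : π (Equiv.swap b r) * c b = c r * π (Equiv.swap b r) := by
      have := hwc (Equiv.swap b r) b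
      rwa [Equiv.swap_apply_left] at this
    calc (1 + c b * c r) * π (Equiv.swap b r) * c b
        = (1 + c b * c r) * (c r * π (Equiv.swap b r)) := by rw [mul_assoc, hs]
      _ = ((1 + c b * c r) * c r) * π (Equiv.swap b r) := by rw [mul_assoc]
      _ = (-(c b * (1 + c b * c r))) * π (Equiv.swap b r) := by rw [key3 (hc2 b) (hc2 r)]
      _ = -(c b * ((1 + c b * c r) * π (Equiv.swap b r))) := by
          rw [neg_mul, mul_assoc]
end
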